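/- arXiv:math/0509208 — 2 statements merged into one kernel-verified Lean document; each statement's English description precedes it below -/
import Mathlib

section
/- For every integer k ≥ 3, the equation F_k(x) = 1 has a unique solution x_k in the open interval (0,1), where F_n is defined by F_0(x) = 1, F_1(x) = x, F_n(x) = 2(2-x)F_{n-1}(x) - F_{n-2}(x). -/
/-!
Substituting `x = 2 - (u + u⁻¹) / 2` with `u > 1` (so `2 - x = cosh (log u)`) solves the
recurrence: `2 (u + 1) uᵏ F_k(x) = (3 - u) u²ᵏ + 3u - 1`. Since `uᵏ ≠ 1`, the equation `F_k(x) = 1`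
becomes `(3 - u) uᵏ = 3u - 1`, whose roots satisfy `u < 3`, i.e. `x > 0`. A root in `(1, 3)` exists
by the intermediate value theorem: the difference of the two sides is positive at `u = 1 + 1/k`
(Bernoulli) and negative at `u = 3`. For uniqueness, `k log u + log (3 - u) - log (3u - 1)` vanishes
at `1` and at every root, so two roots would give, by Rolle's theorem twice, two critical points
`1 < c < d`; but the critical points solve `k (3u - 1)(3 - u) = 8u`, a quadratic whose roots have
product `1`.
-/

noncomputable def F : ℕ → ℝ → ℝ
  | 0, _ => 1
  | 1, x => x
  | (n+2), x => 2 * (2 - x) * F (n+1) x - F n x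

open Real Set

theorem F_two_sub_half_add_inv {u : ℝ} (hu : u ≠ 0) (k : ℕ) :
    2 * (u + 1) * u ^ k * F k (2 - (u + u⁻¹) / 2) = (3 - u) * u ^ (2 * k) + (3 * u - 1) := by
  have hinv : u * u⁻¹ = 1 := mul_inv_cancel₀ hu
  induction k using Nat.twoStepInduction with
  | zero => simp only [F]; ring
  | one => simp only [F]; linear_combination (-u - 1) * hinv
  | more n ih₀ ih₁ =>
    simp only [F]
    linear_combination (u ^ 2 + 1) * ih₁ - u ^ 2 * ih₀
      + 2 * (u + 1) * u ^ (n + 1) * F (n + 1) (2 - (u + u⁻¹) / 2) * hinv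

theorem F_two_sub_half_add_inv_eq_one_iff {u : ℝ} (hu : 1 < u) {k : ℕ} (hk : k ≠ 0) :
    F k (2 - (u + u⁻¹) / 2) = 1 ↔ (3 - u) * u ^ k = 3 * u - 1 := by
  have h := F_two_sub_half_add_inv (by positivity : u ≠ 0) k
  have hscale : 2 * (u + 1) * u ^ k ≠ 0 := by positivity
  have hpow : u ^ k - 1 ≠ 0 := sub_ne_zero.2 (one_lt_pow₀ hu hk).ne'
  constructor
  · intro hF
    rw [hF] at h
    have hfactor : (u ^ k - 1) * ((3 - u) * u ^ k - (3 * u - 1)) = 0 := by linear_combination -h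
    linear_combination (mul_eq_zero.1 hfactor).resolve_left hpow
  · intro hroot
    apply mul_left_cancel₀ hscale
    rw [h]
    linear_combination (u ^ k - 1) * hroot

theorem two_sub_half_add_inv_mem_Ioo {u : ℝ} (h1 : 1 < u) (h3 : u < 3) :
    2 - (u + u⁻¹) / 2 ∈ Ioo 0 1 := by
  have hinv : u * u⁻¹ = 1 := mul_inv_cancel₀ (by positivity)
  have hinv1 : u⁻¹ < 1 := inv_lt_one_of_one_lt₀ h1
  constructor <;> nlinarith

theorem exists_one_lt_half_add_inv_eq {t : ℝ} (ht : 1 < t) : ∃ u, 1 < u ∧ (u + u⁻¹) / 2 = t := by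
  have hsqrt : 0 < √(t ^ 2 - 1) := sqrt_pos.2 (by nlinarith)
  refine ⟨t + √(t ^ 2 - 1), by linarith, ?_⟩
  rw [add_sqrt_self_sq_sub_one_inv ht.le]
  ring

theorem lt_three_of_root {k : ℕ} {u : ℝ} (h : (3 - u) * u ^ k = 3 * u - 1) : u < 3 := by
  by_contra! h3
  have : 0 < u ^ k := by positivity
  nlinarith

theorem exists_root {k : ℕ} (hk : 3 ≤ k) : ∃ u ∈ Ioo (1 : ℝ) 3, (3 - u) * u ^ k = 3 * u - 1 := by
  set e : ℝ := (k : ℝ)⁻¹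
  have hk' : (3 : ℝ) ≤ k := by exact_mod_cast hk
  have he : 0 < e := by positivity
  have he3 : e ≤ 1 / 3 := by rw [inv_le_comm₀ (by positivity) (by norm_num)]; linarith
  have hbernoulli : 2 ≤ (1 + e) ^ k := by
    have := one_add_mul_le_pow (by linarith : -2 ≤ e) k
    rwa [mul_inv_cancel₀ (by positivity), one_add_one_eq_two] at this
  set g : ℝ → ℝ := fun u ↦ (3 - u) * u ^ k - (3 * u - 1)
  have hg : 0 ∈ Ioo (g 3) (g (1 + e)) := by
    constructor
    · norm_num [g]
    · simp only [g]; nlinarith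
  obtain ⟨u, hu, hgu⟩ :=
    intermediate_value_Ioo' (by linarith) (by fun_prop : Continuous g).continuousOn hg
  exact ⟨u, ⟨by linarith [hu.1], hu.2⟩, sub_eq_zero.1 hgu⟩

noncomputable def logRootRatio (k : ℕ) (u : ℝ) : ℝ :=
  k * log u + log (3 - u) - log (3 * u - 1)

theorem logRootRatio_one (k : ℕ) : logRootRatio k 1 = 0 := by
  norm_num [logRootRatio]

theorem logRootRatio_eq_zero_of_root {k : ℕ} {u : ℝ} (hu : 0 < u)
    (h : (3 - u) * u ^ k = 3 * u - 1) : logRootRatio k u = 0 := by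
  have h3 : 3 - u ≠ 0 := (sub_pos.2 (lt_three_of_root h)).ne'
  rw [logRootRatio, ← log_pow, add_comm, ← log_mul h3 (by positivity), h, sub_self]

theorem hasDerivAt_logRootRatio (k : ℕ) {u : ℝ} (h1 : 1 / 3 < u) (h3 : u < 3) :
    HasDerivAt (logRootRatio k) (k / u - 1 / (3 - u) - 3 / (3 * u - 1)) u := by
  have hlog := (hasDerivAt_id u).log (by simp only [id]; linarith)
  have hlog3 := ((hasDerivAt_id u).const_sub 3).log (by simp only [id]; linarith)
  have hlog31 := (((hasDerivAt_id u).const_mul 3).sub_const 1).log (by simp only [id]; linarith)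
  exact ((hlog.const_mul (k : ℝ)).add hlog3 |>.sub hlog31).congr_deriv (by simp only [id]; ring)

theorem exists_critical_point {k : ℕ} {a b : ℝ} (ha : 1 ≤ a) (hab : a < b) (hb : b < 3)
    (h : logRootRatio k a = logRootRatio k b) :
    ∃ c ∈ Ioo a b, k * ((3 * c - 1) * (3 - c)) = 8 * c := by
  obtain ⟨c, hc, hc0⟩ := exists_hasDerivAt_eq_zero hab
    (fun x hx ↦ (hasDerivAt_logRootRatio k (by linarith [hx.1]) (by linarith [hx.2])
      |>.continuousAt.continuousWithinAt)) h
    (fun x hx ↦ hasDerivAt_logRootRatio k (by linarith [hx.1]) (by linarith [hx.2]))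
  refine ⟨c, hc, ?_⟩
  have h0 : c ≠ 0 := by linarith [hc.1]
  have h3 : 3 - c ≠ 0 := by linarith [hc.2]
  have h31 : c * 3 - 1 ≠ 0 := by linarith [hc.1]
  field_simp at hc0
  linear_combination hc0

theorem eq_of_critical_points {κ c d : ℝ} (hc : 1 < c) (hd : 1 < d)
    (hqc : κ * ((3 * c - 1) * (3 - c)) = 8 * c) (hqd : κ * ((3 * d - 1) * (3 - d)) = 8 * d) :
    c = d := by
  have hprod : κ * (3 * (d - c) * (c * d - 1)) = 0 := by linear_combination d * hqc - c * hqd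
  rcases mul_eq_zero.1 hprod with hκ | hdc
  · subst hκ; linarith
  · rcases mul_eq_zero.1 hdc with hdc | hcd
    · linarith
    · nlinarith

theorem root_unique {k : ℕ} {u v : ℝ} (hu : 1 < u) (hv : 1 < v)
    (hru : (3 - u) * u ^ k = 3 * u - 1) (hrv : (3 - v) * v ^ k = 3 * v - 1) : u = v := by
  wlog huv : u < v generalizing u v
  · rcases (not_lt.1 huv).lt_or_eq with hvu | hvu
    · exact (this hv hu hrv hru hvu).symm
    · exact hvu.symm
  have hv3 := lt_three_of_root hrv
  have hzu := logRootRatio_eq_zero_of_root (by linarith) hru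
  have hzv := logRootRatio_eq_zero_of_root (by linarith) hrv
  obtain ⟨c, hc, hqc⟩ := exists_critical_point le_rfl hu (huv.trans hv3)
    ((logRootRatio_one k).trans hzu.symm)
  obtain ⟨d, hd, hqd⟩ := exists_critical_point hu.le huv hv3 (hzu.trans hzv.symm)
  exact absurd (eq_of_critical_points hc.1 (hu.trans hd.1) hqc hqd) (hc.2.trans hd.1).ne

theorem stmt3 (k : ℕ) (hk : 3 ≤ k) :
    ∃! x : ℝ, x ∈ Set.Ioo (0:ℝ) 1 ∧ F k x = 1 := by
  have hk0 : k ≠ 0 := by omega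
  obtain ⟨u₀, ⟨hu₀, hu₀3⟩, hr₀⟩ := exists_root hk
  refine ⟨2 - (u₀ + u₀⁻¹) / 2, ⟨two_sub_half_add_inv_mem_Ioo hu₀ hu₀3,
    (F_two_sub_half_add_inv_eq_one_iff hu₀ hk0).2 hr₀⟩, ?_⟩
  rintro y ⟨hy, hFy⟩
  obtain ⟨u, hu, hut⟩ := exists_one_lt_half_add_inv_eq (show 1 < 2 - y by linarith [hy.2])
  obtain rfl : y = 2 - (u + u⁻¹) / 2 := by linarith
  rw [root_unique hu hu₀ ((F_two_sub_half_add_inv_eq_one_iff hu hk0).1 hFy) hr₀]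
end

section
/- Fix x ∈ (1/3, 1) and define F_n by F_0(x) = 1, F_1(x) = x, F_n(x) = 2(2-x)F_{n-1}(x) - F_{n-2}(x). Then F_n(x) → +∞ as n → ∞. -/
theorem stmt5 (x : ℝ) (hx : x ∈ Set.Ioo (1/3 : ℝ) 1) :
    Filter.Tendsto (fun n : ℕ => F n x) Filter.atTop Filter.atTop := by
  obtain ⟨hx1, hx2⟩ := hx
  set c : ℝ := 2 * (2 - x) with hc_def
  have hc : 2 < c := by rw [hc_def]; linarith
  have hrec : ∀ n : ℕ, F (n+2) x = c * F (n+1) x - F n x := by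
    intro n; rw [hc_def]; rfl
  have hF0 : F 0 x = 1 := rfl
  have hF1 : F 1 x = x := rfl
  have hQ : (3*x-1)*(x-1) < 0 := by nlinarith
  -- the invariant
  have hinv : ∀ n : ℕ, F (n+1) x ^ 2 - c * F (n+1) x * F n x + F n x ^ 2
      = (3*x-1)*(x-1) := by
    intro n
    induction n with
    | zero => rw [hF0, hF1, hc_def]; ring
    | succ n ih =>
      rw [hrec n]
      linear_combination ih
  -- positivity
  have hpos : ∀ n : ℕ, 0 < F n x := by
    intro n
    induction n with
    | zero => rw [hF0]; norm_num
    | succ n ih =>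
      by_contra h
      push_neg at h
      have h1 := hinv n
      nlinarith [mul_nonneg (mul_nonneg (by linarith : (0:ℝ) ≤ c) (by linarith : 0 ≤ -F (n+1) x)) ih.le]
  -- product lower bound
  have hprod : ∀ n : ℕ, (3*x-1)*(1-x) ≤ (c - 2) * (F (n+1) x * F n x) := by
    intro n
    nlinarith [hinv n, sq_nonneg (F (n+1) x - F n x)]
  have hQ' : 0 < (3*x-1)*(1-x) := by nlinarith
  -- there exists n₀ with F n₀ ≤ F (n₀+1)
  have hexists : ∃ n₀ : ℕ, F n₀ x ≤ F (n₀+1) x := by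
    by_contra h
    push_neg at h
    -- sequence strictly decreasing, so F n ≤ 1
    have hle1 : ∀ n : ℕ, F n x ≤ 1 := by
      intro n
      induction n with
      | zero => rw [hF0]
      | succ n ih => exact le_trans (h n).le ih
    -- F (n+1) ≥ δ where δ := (3x-1)(1-x)/(c-2)
    have hlb : ∀ n : ℕ, (3*x-1)*(1-x) ≤ (c-2) * F (n+1) x := by
      intro n
      have := hprod n
      nlinarith [hpos (n+1), hpos n, hle1 n]
    -- the differences d n = F n - F (n+1) decrease by at least (3x-1)(1-x)
    have hd : ∀ n : ℕ, F n x - F (n+1) x ≤ (F 0 x - F 1 x) - n * ((3*x-1)*(1-x)) := by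
      intro n
      induction n with
      | zero => simp
      | succ n ih =>
        have e : n+1+1 = n+2 := rfl
        have h2 := hrec n
        have h3 := hlb n
        rw [e]
        push_cast
        nlinarith
    obtain ⟨n, hn⟩ := exists_nat_gt ((F 0 x - F 1 x) / ((3*x-1)*(1-x)))
    have h4 : (F 0 x - F 1 x) < n * ((3*x-1)*(1-x)) := by
      rw [div_lt_iff₀ hQ'] at hn; linarith
    have h5 := hd n
    have h6 := h n
    linarith
  obtain ⟨n₀, hn₀⟩ := hexists
  set δ : ℝ := (c - 2) * F n₀ x with hδ_def
  have hδ : 0 < δ := by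
    apply mul_pos (by linarith) (hpos n₀)
  -- combined induction: monotone and linear growth from n₀
  have H : ∀ k : ℕ, F (n₀+k) x ≤ F (n₀+k+1) x ∧
      F (n₀+1) x + k * δ ≤ F (n₀+k+1) x := by
    intro k
    induction k with
    | zero => refine ⟨hn₀, by simp⟩
    | succ k ih =>
      obtain ⟨h1, h2⟩ := ih
      have hr : F (n₀+k+2) x = c * F (n₀+k+1) x - F (n₀+k) x := hrec (n₀+k)
      have hp := hpos (n₀+k+1)
      have hkd : (0:ℝ) ≤ k * δ := mul_nonneg (Nat.cast_nonneg k) hδ.le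
      have hge : F n₀ x ≤ F (n₀+k+1) x := by linarith
      constructor
      · show F (n₀+k+1) x ≤ F (n₀+k+1+1) x
        have : n₀+k+1+1 = n₀+k+2 := by omega
        rw [this, hr]
        nlinarith
      · show F (n₀+1) x + (k+1 : ℕ) * δ ≤ F (n₀+(k+1)+1) x
        have : n₀+(k+1)+1 = n₀+k+2 := by omega
        rw [this, hr]
        push_cast
        nlinarith
  -- conclude
  rw [Filter.tendsto_atTop]
  intro b
  obtain ⟨k, hk⟩ := exists_nat_ge ((b - F (n₀+1) x) / δ)
  have hkb : b ≤ F (n₀+1) x + k * δ := by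
    rw [div_le_iff₀ hδ] at hk; linarith
  have hbN : b ≤ F (n₀+k+1) x := le_trans hkb (H k).2
  have hstep : ∀ j : ℕ, n₀ ≤ j → F j x ≤ F (j+1) x := by
    intro j hj
    obtain ⟨i, rfl⟩ := Nat.exists_eq_add_of_le hj
    exact (H i).1
  have hmono : ∀ i : ℕ, F (n₀+k+1) x ≤ F (n₀+k+1+i) x := by
    intro i
    induction i with
    | zero => exact le_rfl
    | succ i ih =>
      have h8 := hstep (n₀+k+1+i) (by omega)
      have e : n₀+k+1+(i+1) = n₀+k+1+i+1 := by omega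
      rw [e]
      exact le_trans ih h8
  filter_upwards [Filter.eventually_ge_atTop (n₀+k+1)] with n hn
  have : F (n₀+k+1) x ≤ F n x := by
    have h7 : n₀+k+1+(n-(n₀+k+1)) = n := by omega
    have := hmono (n-(n₀+k+1))
    rwa [h7] at this
  linarith
end
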